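/- arXiv:1709.10042 — 7 statements merged into one kernel-verified Lean document; each statement's English description precedes it below -/
import Mathlib

section
/- The set of double-ended forks forms an infinite antichain under the induced subgraph order: for m ≠ n, the double-ended fork F_m is not an induced subgraph of F_n. -/
/-!
The vertices of degree at least three in `F_n` (`n ≥ 2`) are the two branch vertices `2` and
`n + 1`, and no vertex has degree four; `F_1` is the star with four leaves. An injective
homomorphism `F_m → F_n` with `m < n` therefore cannot exist for `m = 1`, and for `m ≥ 2` it
sends the two branch vertices of `F_m` onto the two branch vertices of `F_n`. The clamped label
`min (max v 2) (n + 1)` changes by at most one along every edge of `F_n`, so the image of the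
path of `F_m`, which has `m - 1` edges, cannot join labels `2` and `n + 1`.
-/

/-- The double-ended fork `F_n` (for `n ≥ 1`): a path on the `n` vertices
`2, 3, …, n+1`, together with two pendant leaves `0, 1` attached to the
endpoint `2`, and two pendant leaves `n+2, n+3` attached to the endpoint `n+1`. -/
def doubleEndedFork (n : ℕ) : SimpleGraph (Fin (n + 4)) :=
  SimpleGraph.fromRel (fun i j =>
    ((i : ℕ) = 0 ∧ (j : ℕ) = 2) ∨
    ((i : ℕ) = 1 ∧ (j : ℕ) = 2) ∨
    (2 ≤ (i : ℕ) ∧ (i : ℕ) + 1 = (j : ℕ) ∧ (j : ℕ) ≤ n + 1) ∨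
    ((i : ℕ) = n + 1 ∧ (j : ℕ) = n + 2) ∨
    ((i : ℕ) = n + 1 ∧ (j : ℕ) = n + 3))

/-- The relation on labels `i j : ℕ` from which `doubleEndedFork n` is built. -/
def forkRel (n i j : ℕ) : Prop :=
  (i = 0 ∧ j = 2) ∨ (i = 1 ∧ j = 2) ∨ (2 ≤ i ∧ i + 1 = j ∧ j ≤ n + 1) ∨
    (i = n + 1 ∧ j = n + 2) ∨ (i = n + 1 ∧ j = n + 3)

def forkAdj (n i j : ℕ) : Prop :=
  forkRel n i j ∨ forkRel n j i

theorem doubleEndedFork_adj_iff {n : ℕ} {i j : Fin (n + 4)} :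
    (doubleEndedFork n).Adj i j ↔ forkAdj n i j := by
  refine (SimpleGraph.fromRel_adj _ _ _).trans (and_iff_right_of_imp fun h hij => ?_)
  subst hij
  omega

section ForkAdj

variable {n v a b c d : ℕ}

theorem eq_two_or_eq_succ_of_three_forkAdj (hn : 2 ≤ n) (ha : forkAdj n v a) (hb : forkAdj n v b)
    (hc : forkAdj n v c) (hab : a ≠ b) (hac : a ≠ c) (hbc : b ≠ c) : v = 2 ∨ v = n + 1 := by
  unfold forkAdj forkRel at ha hb hc
  omega

theorem not_four_forkAdj (hn : 2 ≤ n) (ha : forkAdj n v a) (hb : forkAdj n v b)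
    (hc : forkAdj n v c) (hd : forkAdj n v d) (hab : a ≠ b) (hac : a ≠ c) (had : a ≠ d)
    (hbc : b ≠ c) (hbd : b ≠ d) (hcd : c ≠ d) : False := by
  unfold forkAdj forkRel at ha hb hc hd
  omega

end ForkAdj

def forkHeight (n v : ℕ) : ℤ :=
  min (max v 2) (n + 1)

theorem abs_forkHeight_sub_le_one {n a b : ℕ} (h : forkAdj n a b) :
    |forkHeight n b - forkHeight n a| ≤ 1 := by
  unfold forkAdj forkRel at h
  unfold forkHeight
  rw [abs_le]
  omega

theorem abs_sub_le_of_abs_succ_sub_le_one {u : ℕ → ℤ} {j : ℕ}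
    (h : ∀ k < j, |u (k + 1) - u k| ≤ 1) : |u j - u 0| ≤ j := by
  induction j with
  | zero => simp
  | succ j ih =>
    calc |u (j + 1) - u 0| ≤ |u (j + 1) - u j| + |u j - u 0| := abs_sub_le _ _ _
      _ ≤ 1 + j := add_le_add (h j j.lt_succ_self) (ih fun k hk => h k (by omega))
      _ = (j + 1 : ℕ) := by push_cast; ring

theorem forkAdj.lt_add_four {n i j : ℕ} (h : forkAdj n i j) : i < n + 4 ∧ j < n + 4 := by
  unfold forkAdj forkRel at h
  omega

theorem exists_forkAdj_map {m n : ℕ} (f : doubleEndedFork m →g doubleEndedFork n)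
    (hf : Function.Injective f) :
    ∃ g : ℕ → ℕ, (∀ i j, forkAdj m i j → forkAdj n (g i) (g j)) ∧
      Set.InjOn g (Set.Iio (m + 4)) := by
  refine ⟨fun i => if h : i < m + 4 then f ⟨i, h⟩ else 0, fun i j hij => ?_, fun i hi j hj hij => ?_⟩
  · obtain ⟨hi, hj⟩ := hij.lt_add_four
    simp only [dif_pos hi, dif_pos hj]
    exact doubleEndedFork_adj_iff.1 (f.map_adj (doubleEndedFork_adj_iff.2 hij))
  · simp only [dif_pos (Set.mem_Iio.1 hi), dif_pos (Set.mem_Iio.1 hj)] at hij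
    exact congrArg Fin.val (hf (Fin.val_injective hij))

section ForkAdjMap

variable {m n : ℕ} {g : ℕ → ℕ} (hg : ∀ i j, forkAdj m i j → forkAdj n (g i) (g j))
  (hinj : Set.InjOn g (Set.Iio (m + 4)))
include hg hinj

theorem le_one_of_forkAdj_map_of_eq_one (hm : m = 1) : n ≤ 1 := by
  subst hm
  by_contra! hn
  refine not_four_forkAdj hn (hg 2 0 ?_) (hg 2 1 ?_) (hg 2 3 ?_) (hg 2 4 ?_)
    (hinj.ne ?_ ?_ ?_) (hinj.ne ?_ ?_ ?_) (hinj.ne ?_ ?_ ?_) (hinj.ne ?_ ?_ ?_)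
    (hinj.ne ?_ ?_ ?_) (hinj.ne ?_ ?_ ?_)
  all_goals norm_num [forkAdj, forkRel]

theorem eq_two_or_eq_succ_of_forkAdj_map (hn : 2 ≤ n) {v a b c : ℕ} (ha : forkAdj m v a)
    (hb : forkAdj m v b) (hc : forkAdj m v c) (hab : a ≠ b) (hac : a ≠ c) (hbc : b ≠ c) :
    g v = 2 ∨ g v = n + 1 :=
  eq_two_or_eq_succ_of_three_forkAdj hn (hg _ _ ha) (hg _ _ hb) (hg _ _ hc)
    (hinj.ne ha.lt_add_four.2 hb.lt_add_four.2 hab) (hinj.ne ha.lt_add_four.2 hc.lt_add_four.2 hac)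
    (hinj.ne hb.lt_add_four.2 hc.lt_add_four.2 hbc)

theorem le_of_forkAdj_map_of_two_le (hm : 2 ≤ m) : n ≤ m := by
  by_contra! hmn
  have hn : 2 ≤ n := by omega
  have hbranch_low : g 2 = 2 ∨ g 2 = n + 1 :=
    eq_two_or_eq_succ_of_forkAdj_map hg hinj hn (a := 0) (b := 1) (c := 3)
      (by unfold forkAdj forkRel; omega) (by unfold forkAdj forkRel; omega)
      (by unfold forkAdj forkRel; omega) (by omega) (by omega) (by omega)
  have hbranch_high : g (m + 1) = 2 ∨ g (m + 1) = n + 1 :=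
    eq_two_or_eq_succ_of_forkAdj_map hg hinj hn (a := m) (b := m + 2) (c := m + 3)
      (by unfold forkAdj forkRel; omega) (by unfold forkAdj forkRel; omega)
      (by unfold forkAdj forkRel; omega) (by omega) (by omega) (by omega)
  have hbranch_ne : g 2 ≠ g (m + 1) := hinj.ne (by simp) (by simp) (by omega)
  have hpath : |forkHeight n (g (m - 1 + 2)) - forkHeight n (g (0 + 2))| ≤ (m - 1 : ℕ) :=
    abs_sub_le_of_abs_succ_sub_le_one (u := fun k => forkHeight n (g (k + 2))) fun k hk =>
      abs_forkHeight_sub_le_one (hg _ _ (by unfold forkAdj forkRel; omega))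
  rw [show m - 1 + 2 = m + 1 by omega, zero_add, abs_le] at hpath
  unfold forkHeight at hpath
  omega

end ForkAdjMap

theorem eq_of_injective_doubleEndedFork_hom {m n : ℕ} (hm : 1 ≤ m)
    (f : doubleEndedFork m →g doubleEndedFork n) (hf : Function.Injective f) : m = n := by
  have hle : m ≤ n := by simpa using Fintype.card_le_of_injective f hf
  obtain ⟨g, hg, hinj⟩ := exists_forkAdj_map f hf
  refine le_antisymm hle ?_
  rcases hm.eq_or_lt with rfl | hm2
  · exact le_one_of_forkAdj_map_of_eq_one hg hinj rfl
  · exact le_of_forkAdj_map_of_two_le hg hinj hm2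

theorem doubleEndedForks_antichain_general (m n : ℕ) (hm : 1 ≤ m) (hmn : m ≠ n) :
    IsEmpty (doubleEndedFork m ↪g doubleEndedFork n) :=
  ⟨fun f => hmn (eq_of_injective_doubleEndedFork_hom hm f.toHom f.injective)⟩

/-- The double-ended forks form an infinite antichain under the induced subgraph
order: for `m ≠ n` (both at least 1), `F_m` is not an induced subgraph of `F_n`. -/
theorem doubleEndedForks_antichain (m n : ℕ) (hm : 1 ≤ m) (hn : 1 ≤ n) (hmn : m ≠ n) :
    IsEmpty (doubleEndedFork m ↪g doubleEndedFork n) :=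
  doubleEndedForks_antichain_general m n hm hmn
end

section
/- Paths labelled by a two-element antichain form an infinite antichain under the labelled induced subgraph order: for m < n, the path P_m with both endpoints colored white and interior vertices colored black does not labelled-embed into the similarly colored path P_n. -/
/-- The colouring of the path `P_n` in which the two endpoints are white (`true`)
and all interior vertices are black (`false`). -/
def pathEndColoring (n : ℕ) (v : Fin n) : Bool :=
  decide ((v : ℕ) = 0 ∨ (v : ℕ) = n - 1)

/-
An induced embedding `f` of `P_m` into `P_n` sending the first vertex to the end `0`
of `P_n` is the identity on indices: `f (k + 1)` is a neighbour of `f k = k` and cannot be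
`k - 1 = f (k - 1)` by injectivity. Since the first vertex of `P_m` is white, its image is an end
of `P_n`, and after reversing `P_n` we may assume it is `0`. Then the white last vertex `m - 1`
of `P_m` goes to the black vertex `m - 1` of `P_n`, as `0 < m - 1 < n - 1`.
-/

open SimpleGraph

def pathGraphRevIso (n : ℕ) : pathGraph n ≃g pathGraph n where
  toEquiv := Fin.revPerm
  map_rel_iff' {u v} := by
    simp only [Fin.revPerm_apply, pathGraph_adj, Fin.val_rev]
    omega

lemma pathEndColoring_rev {n : ℕ} (v : Fin n) :
    pathEndColoring n v.rev = pathEndColoring n v := by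
  simp only [pathEndColoring, Fin.val_rev, decide_eq_decide]
  omega

lemma pathGraph_embedding_val_eq {m n : ℕ} (f : pathGraph m ↪g pathGraph n)
    (h₀ : ∀ i : Fin m, i.val = 0 → (f i).val = 0) (i : Fin m) : (f i).val = i.val := by
  obtain ⟨k, hk⟩ := i
  induction k using Nat.strong_induction_on with
  | _ k ih =>
    rcases k with _ | k
    · exact h₀ _ rfl
    have hprev : (f ⟨k, by omega⟩).val = k := ih k (by omega) _
    have hadj := f.map_rel_iff.mpr (pathGraph_adj.mpr (.inl rfl) :
      (pathGraph m).Adj ⟨k, by omega⟩ ⟨k + 1, hk⟩)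
    rw [pathGraph_adj, hprev] at hadj
    rcases hadj with hnext | hback
    · exact hnext.symm
    obtain ⟨j, rfl⟩ : ∃ j, k = j + 1 := ⟨k - 1, by omega⟩
    have hj : (f ⟨j, by omega⟩).val = j := ih j (by omega) _
    have hcollide : f ⟨j, by omega⟩ = f ⟨j + 1 + 1, hk⟩ := Fin.ext (by omega)
    exact absurd (f.injective hcollide) (by simp only [Fin.mk.injEq]; omega)

lemma exists_pathEndColoring_ne_of_val_apply_zero {m n : ℕ} (hm : 2 ≤ m) (hmn : m < n)
    (f : pathGraph m ↪g pathGraph n) (h₀ : (f ⟨0, by omega⟩).val = 0) :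
    ∃ v : Fin m, pathEndColoring n (f v) ≠ pathEndColoring m v := by
  have hid := pathGraph_embedding_val_eq f fun i hi => by
    rwa [show i = ⟨0, by omega⟩ from Fin.ext hi]
  refine ⟨⟨m - 1, by omega⟩, ?_⟩
  simp only [pathEndColoring, hid, ne_eq, decide_eq_decide, or_true, iff_true]
  omega

/-- Paths labelled by a two-element antichain form an infinite antichain in the
labelled induced subgraph order: for `2 ≤ m < n`, the path `P_m` with white
endpoints and black interior does not labelled-embed into the similarly
coloured path `P_n` (labels from an antichain must be preserved exactly). -/
theorem labelled_paths_antichain (m n : ℕ) (hm : 2 ≤ m) (hmn : m < n) :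
    ¬ ∃ f : SimpleGraph.pathGraph m ↪g SimpleGraph.pathGraph n,
        ∀ v : Fin m, pathEndColoring n (f v) = pathEndColoring m v := by
  rintro ⟨f, hf⟩
  have hend : (f ⟨0, by omega⟩).val = 0 ∨ (f ⟨0, by omega⟩).val = n - 1 := by
    simpa [pathEndColoring] using hf ⟨0, by omega⟩
  rcases hend with hstart | hend
  · obtain ⟨v, hv⟩ := exists_pathEndColoring_ne_of_val_apply_zero hm hmn f hstart
    exact hv (hf v)
  · obtain ⟨v, hv⟩ := exists_pathEndColoring_ne_of_val_apply_zero hm hmn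
      ((pathGraphRevIso n).toEmbedding.comp f)
      (show (f _).rev.val = 0 by rw [Fin.val_rev, hend]; omega)
    exact hv ((pathEndColoring_rev (f v)).trans (hf v))
end

section
/- Every 2-well-quasi-ordered hereditary class of graphs is defined by finitely many minimal forbidden induced subgraphs; that is, the set of minimal forbidden induced subgraphs of a 2-wqo class is finite. -/
/-- A finite graph: a number of vertices together with a simple graph on them. -/
abbrev FinGraph := Σ n : ℕ, SimpleGraph (Fin n)

/-- `H` is (isomorphic to) an induced subgraph of `G`. -/
def IsInducedSubgraph (H G : FinGraph) : Prop :=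
  Nonempty (H.2 ↪g G.2)

/-- A hereditary class of finite graphs: closed under (isomorphism and)
taking induced subgraphs. -/
def Hereditary (C : Set FinGraph) : Prop :=
  ∀ G ∈ C, ∀ H : FinGraph, IsInducedSubgraph H G → H ∈ C

/-- A labelled induced subgraph embedding of `(H, kH)` into `(G, kG)`, where the
labels come from the two-element antichain `Bool` (so labels must match exactly). -/
def LabelledEmb (H G : FinGraph) (kH : Fin H.1 → Bool) (kG : Fin G.1 → Bool) : Prop :=
  ∃ f : H.2 ↪g G.2, ∀ v, kG (f v) = kH v

/-- A class `C` is `2`-well-quasi-ordered if in every infinite sequence of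
graphs from `C` labelled by the two-element antichain, some earlier term
labelled-embeds into a later one. -/
def TwoWqo (C : Set FinGraph) : Prop :=
  ∀ (G : ℕ → FinGraph) (l : ∀ i, Fin (G i).1 → Bool),
    (∀ i, G i ∈ C) →
    ∃ i j, i < j ∧ LabelledEmb (G i) (G j) (l i) (l j)

/-- `G` is a minimal forbidden induced subgraph of the class `C`: `G ∉ C` and
every proper induced subgraph (one with strictly fewer vertices) lies in `C`. -/
def MinimalForbidden (C : Set FinGraph) (G : FinGraph) : Prop :=
  G ∉ C ∧ ∀ H : FinGraph, IsInducedSubgraph H G → H.1 < G.1 → H ∈ C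

/-!
If there were infinitely many minimal forbidden graphs, there would be infinitely many of them
with pairwise distinct, positive numbers of vertices. Deleting the last vertex of each one gives a
graph in the class, labelled by adjacency to the deleted vertex. By 2-wqo one labelled graph embeds
into a later one, and adding the deleted vertex back turns this into an induced embedding of the
first minimal forbidden graph into the second, which is impossible when their sizes differ.
-/

theorem finite_of_finite_image_fst {S : Set FinGraph} (h : (Sigma.fst '' S).Finite) :
    S.Finite := by
  refine (h.preimage' fun n _ => ?_).subset (Set.subset_preimage_image _ _)
  rw [← Set.range_sigmaMk]
  exact Set.finite_range _

theorem IsInducedSubgraph.card_le {H G : FinGraph} (h : IsInducedSubgraph H G) : H.1 ≤ G.1 :=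
  let ⟨f⟩ := h
  Fin.le_of_embedding f.toEmbedding

theorem MinimalForbidden.card_eq_of_isInducedSubgraph {C : Set FinGraph} {H G : FinGraph}
    (hH : MinimalForbidden C H) (hG : MinimalForbidden C G) (h : IsInducedSubgraph H G) :
    H.1 = G.1 :=
  h.card_le.antisymm (not_lt.1 fun hlt => hH.1 (hG.2 H h hlt))

section DeleteLast

variable {m n : ℕ}

def initGraph (G : SimpleGraph (Fin (n + 1))) : FinGraph :=
  ⟨n, G.comap Fin.castSucc⟩

open Classical in
noncomputable def lastNbrLabel (G : SimpleGraph (Fin (n + 1))) : Fin n → Bool :=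
  fun v => decide (G.Adj v.castSucc (Fin.last n))

theorem initGraph_isInducedSubgraph (G : SimpleGraph (Fin (n + 1))) :
    IsInducedSubgraph (initGraph G) ⟨n + 1, G⟩ :=
  ⟨SimpleGraph.Embedding.comap Fin.castSuccEmb G⟩

theorem MinimalForbidden.initGraph_mem {C : Set FinGraph} {G : SimpleGraph (Fin (n + 1))}
    (hG : MinimalForbidden C ⟨n + 1, G⟩) : initGraph G ∈ C :=
  hG.2 _ (initGraph_isInducedSubgraph G) n.lt_succ_self

/-- The labelled embedding extends by sending the last vertex to the last vertex. -/
theorem isInducedSubgraph_of_labelledEmb {G : SimpleGraph (Fin (m + 1))}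
    {H : SimpleGraph (Fin (n + 1))}
    (h : LabelledEmb (initGraph G) (initGraph H) (lastNbrLabel G) (lastNbrLabel H)) :
    IsInducedSubgraph ⟨m + 1, G⟩ ⟨n + 1, H⟩ := by
  obtain ⟨f, hf⟩ : ∃ f : G.comap Fin.castSucc ↪g H.comap Fin.castSucc,
      ∀ v, lastNbrLabel H (f v) = lastNbrLabel G v := h
  have hinit (a b : Fin m) : H.Adj (f a).castSucc (f b).castSucc ↔ G.Adj a.castSucc b.castSucc :=
    f.map_adj_iff
  have hlast (a : Fin m) : H.Adj (f a).castSucc (Fin.last n) ↔ G.Adj a.castSucc (Fin.last m) := by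
    have := hf a
    simp only [lastNbrLabel, decide_eq_decide] at this
    exact this
  let g : Fin (m + 1) → Fin (n + 1) := Fin.lastCases (Fin.last n) fun a => (f a).castSucc
  have hg_last : g (Fin.last m) = Fin.last n := Fin.lastCases_last
  have hg_castSucc (a : Fin m) : g a.castSucc = (f a).castSucc := Fin.lastCases_castSucc a
  have hg_adj (a b : Fin (m + 1)) : H.Adj (g a) (g b) ↔ G.Adj a b := by
    induction a using Fin.lastCases with
    | last =>
      induction b using Fin.lastCases with
      | last => simp only [hg_last, SimpleGraph.irrefl]
      | cast b => rw [hg_last, hg_castSucc, H.adj_comm, G.adj_comm, hlast]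
    | cast a =>
      induction b using Fin.lastCases with
      | last => rw [hg_last, hg_castSucc, hlast]
      | cast b => rw [hg_castSucc, hg_castSucc, hinit]
  have hg_inj : Function.Injective g := by
    intro a b hab
    induction a using Fin.lastCases with
    | last =>
      induction b using Fin.lastCases with
      | last => rfl
      | cast b =>
        rw [hg_last, hg_castSucc] at hab
        exact absurd hab.symm (Fin.castSucc_ne_last _)
    | cast a =>
      induction b using Fin.lastCases with
      | last =>
        rw [hg_last, hg_castSucc] at hab
        exact absurd hab (Fin.castSucc_ne_last _)
      | cast b =>
        rw [hg_castSucc, hg_castSucc] at hab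
        exact congrArg _ (f.injective (Fin.castSucc_injective _ hab))
  exact ⟨⟨⟨g, hg_inj⟩, hg_adj _ _⟩⟩

end DeleteLast

theorem twoWqo_finitely_many_minimal_forbidden_general (C : Set FinGraph)
    (h2 : TwoWqo C) :
    {G : FinGraph | MinimalForbidden C G}.Finite := by
  by_contra hinf
  have hsizes : (Sigma.fst '' {G | MinimalForbidden C G} \ {0}).Infinite :=
    Set.Infinite.sdiff (mt finite_of_finite_image_fst hinf) (Set.finite_singleton 0)
  let e := hsizes.natEmbedding
  have hgraph (k : ℕ) : ∃ (n : ℕ) (G : SimpleGraph (Fin (n + 1))),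
      MinimalForbidden C ⟨n + 1, G⟩ ∧ n + 1 = e k := by
    obtain ⟨⟨⟨_ | n, G⟩, hG, hsize⟩, hne⟩ := (e k).2
    · exact absurd hsize.symm hne
    · exact ⟨n, G, hG, hsize⟩
  choose n G hG hsize using hgraph
  obtain ⟨i, j, hij, hemb⟩ :=
    h2 (fun k => initGraph (G k)) (fun k => lastNbrLabel (G k)) fun k => (hG k).initGraph_mem
  have hcard := (hG i).card_eq_of_isInducedSubgraph (hG j) (isInducedSubgraph_of_labelledEmb hemb)
  exact hij.ne (e.injective (Subtype.ext ((hsize i).symm.trans (hcard.trans (hsize j)))))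

/-- Every 2-well-quasi-ordered hereditary class of graphs has only finitely
many minimal forbidden induced subgraphs. -/
theorem twoWqo_finitely_many_minimal_forbidden (C : Set FinGraph)
    (hC : Hereditary C) (h2 : TwoWqo C) :
    {G : FinGraph | MinimalForbidden C G}.Finite :=
  twoWqo_finitely_many_minimal_forbidden_general C h2
end

section
/- If a permutation π avoids 2143 and is sum decomposable, i.e., π = σ ⊕ τ for nonempty permutations σ and τ, then at least one of σ and τ is an increasing permutation (the identity). -/
/-- `π` contains the pattern `σ`: there is an increasing choice of positions of
`π` whose values appear in the same relative order as `σ`. -/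
def Contains {n k : ℕ} (π : Equiv.Perm (Fin n)) (σ : Equiv.Perm (Fin k)) : Prop :=
  ∃ f : Fin k ↪o Fin n, ∀ j j' : Fin k, σ j < σ j' ↔ π (f j) < π (f j')

/-- The sum `σ ⊕ τ` of two permutations: `τ` is placed above and to the right of `σ`. -/
def sumPerm {k l : ℕ} (σ : Equiv.Perm (Fin k)) (τ : Equiv.Perm (Fin l)) :
    Equiv.Perm (Fin (k + l)) :=
  finSumFinEquiv.symm.trans ((Equiv.sumCongr σ τ).trans finSumFinEquiv)

/-- The pattern 2143 (0-indexed one-line notation 1 0 3 2). -/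
def p2143 : Equiv.Perm (Fin 4) := Equiv.mk ![1, 0, 3, 2] ![1, 0, 3, 2] (by decide) (by decide)

/-! A permutation other than the identity has an inversion, i.e. contains the pattern 21, and
pattern containment is compatible with `⊕`. As `2143 = 21 ⊕ 21`, if neither summand of
`σ ⊕ τ` were the identity, the two inversions would together form a copy of 2143. -/

namespace Fin

variable {m n : ℕ}

@[simp]
theorem castAdd_lt_natAdd (i : Fin n) (j : Fin m) : castAdd m i < natAdd n j := by
  rw [lt_def, val_castAdd, val_natAdd]
  omega

@[simp]
theorem not_natAdd_lt_castAdd (i : Fin n) (j : Fin m) : ¬natAdd n j < castAdd m i :=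
  (castAdd_lt_natAdd i j).not_gt

@[simp]
theorem castAdd_lt_castAdd_iff {i j : Fin n} : castAdd m i < castAdd m j ↔ i < j :=
  (strictMono_castAdd m).lt_iff_lt

end Fin

section SumPerm

variable {k l a b : ℕ}

@[simp]
theorem sumPerm_castAdd (σ : Equiv.Perm (Fin k)) (τ : Equiv.Perm (Fin l)) (i : Fin k) :
    sumPerm σ τ (Fin.castAdd l i) = Fin.castAdd l (σ i) := by
  simp [sumPerm]

@[simp]
theorem sumPerm_natAdd (σ : Equiv.Perm (Fin k)) (τ : Equiv.Perm (Fin l)) (i : Fin l) :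
    sumPerm σ τ (Fin.natAdd k i) = Fin.natAdd k (τ i) := by
  simp [sumPerm]

theorem Contains.sumPerm {σ : Equiv.Perm (Fin k)} {τ : Equiv.Perm (Fin l)}
    {α : Equiv.Perm (Fin a)} {β : Equiv.Perm (Fin b)}
    (hσ : Contains σ α) (hτ : Contains τ β) : Contains (sumPerm σ τ) (sumPerm α β) := by
  obtain ⟨f, hf⟩ := hσ
  obtain ⟨g, hg⟩ := hτ
  let e : Fin (a + b) → Fin (k + l) := Fin.append (Fin.castAdd l ∘ f) (Fin.natAdd k ∘ g)
  have he : StrictMono e := by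
    intro x y hxy
    induction x using Fin.addCases <;> induction y using Fin.addCases <;>
      simp_all [e]
  refine ⟨OrderEmbedding.ofStrictMono e he, fun x y => ?_⟩
  induction x using Fin.addCases <;> induction y using Fin.addCases <;>
    simp_all [e]

end SumPerm

theorem Equiv.Perm.exists_inversion_of_ne_one {α : Type*} [LinearOrder α] [Finite α]
    {σ : Equiv.Perm α} (hσ : σ ≠ 1) : ∃ i j, i < j ∧ σ j < σ i := by
  contrapose! hσ
  have hmono : StrictMono σ := fun i j hij => (hσ i j hij).lt_of_ne (σ.injective.ne hij.ne)
  exact Equiv.ext (congrFun hmono.eq_id)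

theorem contains_swap_of_inversion {n : ℕ} {σ : Equiv.Perm (Fin n)} {i j : Fin n} (hij : i < j)
    (hσ : σ j < σ i) : Contains σ (Equiv.swap 0 1 : Equiv.Perm (Fin 2)) := by
  have hmono : StrictMono ![i, j] := by
    intro x y hxy
    fin_cases x <;> fin_cases y <;> simp_all
  refine ⟨OrderEmbedding.ofStrictMono _ hmono, fun x y => ?_⟩
  fin_cases x <;> fin_cases y <;> simp [hσ, hσ.not_gt]

theorem contains_swap_of_ne_one {n : ℕ} {σ : Equiv.Perm (Fin n)} (hσ : σ ≠ 1) :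
    Contains σ (Equiv.swap 0 1 : Equiv.Perm (Fin 2)) :=
  let ⟨_, _, hij, hσij⟩ := Equiv.Perm.exists_inversion_of_ne_one hσ
  contains_swap_of_inversion hij hσij

theorem p2143_eq_sumPerm :
    p2143 = sumPerm (k := 2) (l := 2) (Equiv.swap 0 1) (Equiv.swap 0 1) := by
  decide

theorem sum_decomposable_avoid_2143_general {k l : ℕ}
    (σ : Equiv.Perm (Fin k)) (τ : Equiv.Perm (Fin l))
    (h : ¬ Contains (sumPerm σ τ) p2143) :
    σ = Equiv.refl (Fin k) ∨ τ = Equiv.refl (Fin l) := by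
  by_contra! hne
  exact h <| p2143_eq_sumPerm ▸
    (contains_swap_of_ne_one hne.1).sumPerm (contains_swap_of_ne_one hne.2)

/-- If a permutation avoids 2143 and is sum decomposable, `π = σ ⊕ τ` with `σ, τ`
nonempty, then at least one of `σ` and `τ` is increasing (the identity). -/
theorem sum_decomposable_avoid_2143 {k l : ℕ} (hk : 0 < k) (hl : 0 < l)
    (σ : Equiv.Perm (Fin k)) (τ : Equiv.Perm (Fin l))
    (h : ¬ Contains (sumPerm σ τ) p2143) :
    σ = Equiv.refl (Fin k) ∨ τ = Equiv.refl (Fin l) :=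
  sum_decomposable_avoid_2143_general σ τ h
end

section
/- Every skew-merged permutation avoids both 2143 and 3412. -/
/-- The pattern 3412 (0-indexed one-line notation 2 3 0 1). -/
def p3412 : Equiv.Perm (Fin 4) := Equiv.mk ![2, 3, 0, 1] ![2, 3, 0, 1] (by decide) (by decide)

/-- `π` is skew-merged: its positions split into a set `P` on which `π` is
increasing and a complementary set on which `π` is decreasing. -/
def SkewMerged {n : ℕ} (π : Equiv.Perm (Fin n)) : Prop :=
  ∃ P : Fin n → Prop,
    (∀ i j, i < j → P i → P j → π i < π j) ∧
    (∀ i j, i < j → ¬ P i → ¬ P j → π j < π i)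

/-- Every skew-merged permutation avoids both 2143 and 3412. -/
theorem skewMerged_avoids {n : ℕ} (π : Equiv.Perm (Fin n)) (h : SkewMerged π) :
    ¬ Contains π p2143 ∧ ¬ Contains π p3412 := by
  obtain ⟨P, hinc, hdec⟩ := h
  constructor
  · rintro ⟨f, hf⟩
    have p01 : f 0 < f 1 := f.strictMono (by decide)
    have p02 : f 0 < f 2 := f.strictMono (by decide)
    have p03 : f 0 < f 3 := f.strictMono (by decide)
    have p12 : f 1 < f 2 := f.strictMono (by decide)
    have p13 : f 1 < f 3 := f.strictMono (by decide)
    have p23 : f 2 < f 3 := f.strictMono (by decide)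
    have h01 : π (f 1) < π (f 0) := (hf 1 0).mp (by decide)
    have h23 : π (f 3) < π (f 2) := (hf 3 2).mp (by decide)
    have h02 : π (f 0) < π (f 2) := (hf 0 2).mp (by decide)
    have h03 : π (f 0) < π (f 3) := (hf 0 3).mp (by decide)
    have h12 : π (f 1) < π (f 2) := (hf 1 2).mp (by decide)
    have h13 : π (f 1) < π (f 3) := (hf 1 3).mp (by decide)
    have n01 : ¬(P (f 0) ∧ P (f 1)) := fun ⟨a, b⟩ => lt_asymm h01 (hinc _ _ p01 a b)
    have n23 : ¬(P (f 2) ∧ P (f 3)) := fun ⟨a, b⟩ => lt_asymm h23 (hinc _ _ p23 a b)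
    have m02 : ¬(¬P (f 0) ∧ ¬P (f 2)) := fun ⟨a, b⟩ => lt_asymm h02 (hdec _ _ p02 a b)
    have m03 : ¬(¬P (f 0) ∧ ¬P (f 3)) := fun ⟨a, b⟩ => lt_asymm h03 (hdec _ _ p03 a b)
    have m12 : ¬(¬P (f 1) ∧ ¬P (f 2)) := fun ⟨a, b⟩ => lt_asymm h12 (hdec _ _ p12 a b)
    have m13 : ¬(¬P (f 1) ∧ ¬P (f 3)) := fun ⟨a, b⟩ => lt_asymm h13 (hdec _ _ p13 a b)
    tauto
  · rintro ⟨f, hf⟩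
    have p01 : f 0 < f 1 := f.strictMono (by decide)
    have p02 : f 0 < f 2 := f.strictMono (by decide)
    have p03 : f 0 < f 3 := f.strictMono (by decide)
    have p12 : f 1 < f 2 := f.strictMono (by decide)
    have p13 : f 1 < f 3 := f.strictMono (by decide)
    have p23 : f 2 < f 3 := f.strictMono (by decide)
    have h01 : π (f 0) < π (f 1) := (hf 0 1).mp (by decide)
    have h23 : π (f 2) < π (f 3) := (hf 2 3).mp (by decide)
    have h02 : π (f 2) < π (f 0) := (hf 2 0).mp (by decide)
    have h03 : π (f 3) < π (f 0) := (hf 3 0).mp (by decide)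
    have h12 : π (f 2) < π (f 1) := (hf 2 1).mp (by decide)
    have h13 : π (f 3) < π (f 1) := (hf 3 1).mp (by decide)
    have m01 : ¬(¬P (f 0) ∧ ¬P (f 1)) := fun ⟨a, b⟩ => lt_asymm h01 (hdec _ _ p01 a b)
    have m23 : ¬(¬P (f 2) ∧ ¬P (f 3)) := fun ⟨a, b⟩ => lt_asymm h23 (hdec _ _ p23 a b)
    have n02 : ¬(P (f 0) ∧ P (f 2)) := fun ⟨a, b⟩ => lt_asymm h02 (hinc _ _ p02 a b)
    have n03 : ¬(P (f 0) ∧ P (f 3)) := fun ⟨a, b⟩ => lt_asymm h03 (hinc _ _ p03 a b)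
    have n12 : ¬(P (f 1) ∧ P (f 2)) := fun ⟨a, b⟩ => lt_asymm h12 (hinc _ _ p12 a b)
    have n13 : ¬(P (f 1) ∧ P (f 3)) := fun ⟨a, b⟩ => lt_asymm h13 (hinc _ _ p13 a b)
    tauto
end

section
/- If a graph G is a split graph (its vertex set partitions into a clique and an independent set), then G contains neither 2K_2 nor C_4 as an induced subgraph. -/
/-!
If `K` is the clique of a split graph, every edge has an endpoint in `K`, while `K` contains at
most one vertex of each nonadjacent pair. For two disjoint edges this puts two nonadjacent
vertices into `K`; for a 4-cycle it leaves one vertex of each diagonal outside `K`, and two such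
vertices are adjacent, contradicting independence of the complement.
-/

/-- The graph `2K₂`: two disjoint edges on four vertices. -/
def twoK2 : SimpleGraph (Fin 4) :=
  SimpleGraph.fromRel (fun i j => ((i : ℕ) = 0 ∧ (j : ℕ) = 1) ∨ ((i : ℕ) = 2 ∧ (j : ℕ) = 3))

/-- `G` is a split graph: its vertex set partitions into a clique and an
independent set. -/
def IsSplit {V : Type*} (G : SimpleGraph V) : Prop :=
  ∃ K : Set V, G.IsClique K ∧ ∀ a ∈ Kᶜ, ∀ b ∈ Kᶜ, ¬ G.Adj a b

instance : DecidableRel twoK2.Adj := fun _ _ => by unfold twoK2; infer_instance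

namespace IsSplit

variable {V : Type*} {G : SimpleGraph V}

theorem mem_or_mem_of_adj {K : Set V} (hK : ∀ a ∈ Kᶜ, ∀ b ∈ Kᶜ, ¬ G.Adj a b) {u v : V}
    (huv : G.Adj u v) : u ∈ K ∨ v ∈ K := by
  by_contra! h
  exact hK u h.1 v h.2 huv

theorem adj_across_of_adj_of_adj (hG : IsSplit G) {a b c d : V} (hab : G.Adj a b)
    (hcd : G.Adj c d) : G.Adj a c ∨ G.Adj a d ∨ G.Adj b c ∨ G.Adj b d := by
  obtain ⟨K, hK, hI⟩ := hG
  have eq_or_adj : ∀ x ∈ K, ∀ y ∈ K, x = y ∨ G.Adj x y := fun x hx y hy =>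
    (eq_or_ne x y).imp_right (hK hx hy)
  have := hab.symm
  have := hcd.symm
  rcases mem_or_mem_of_adj hI hab with hx | hx <;>
    rcases mem_or_mem_of_adj hI hcd with hy | hy <;>
    rcases eq_or_adj _ hx _ hy with rfl | h <;> tauto

theorem adj_or_adj_of_four_cycle (hG : IsSplit G) {a b c d : V} (hab : G.Adj a b)
    (hbc : G.Adj b c) (hcd : G.Adj c d) (hda : G.Adj d a) (hac : a ≠ c) (hbd : b ≠ d) :
    G.Adj a c ∨ G.Adj b d := by
  obtain ⟨K, hK, hI⟩ := hG
  by_cases hacK : a ∈ K ∧ c ∈ K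
  · exact .inl (hK hacK.1 hacK.2 hac)
  by_cases hbdK : b ∈ K ∧ d ∈ K
  · exact .inr (hK hbdK.1 hbdK.2 hbd)
  rcases not_and_or.1 hacK with hx | hx <;> rcases not_and_or.1 hbdK with hy | hy
  exacts [(hI _ hx _ hy hab).elim, (hI _ hx _ hy hda.symm).elim, (hI _ hx _ hy hbc.symm).elim,
    (hI _ hx _ hy hcd).elim]

end IsSplit

/-- A split graph contains neither `2K₂` nor `C₄` as an induced subgraph. -/
theorem split_graph_no_2K2_no_C4 {V : Type*} (G : SimpleGraph V) (h : IsSplit G) :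
    IsEmpty (twoK2 ↪g G) ∧ IsEmpty (SimpleGraph.cycleGraph 4 ↪g G) := by
  refine ⟨⟨fun f => ?_⟩, ⟨fun f => ?_⟩⟩
  · have := h.adj_across_of_adj_of_adj (f.map_adj_iff.2 (by decide : twoK2.Adj 0 1))
      (f.map_adj_iff.2 (by decide : twoK2.Adj 2 3))
    simp only [f.map_adj_iff] at this
    revert this
    decide
  · have := h.adj_or_adj_of_four_cycle (a := f 0) (b := f 1) (c := f 2) (d := f 3)
      (f.map_adj_iff.2 (by decide)) (f.map_adj_iff.2 (by decide)) (f.map_adj_iff.2 (by decide))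
      (f.map_adj_iff.2 (by decide)) (f.injective.ne (by decide)) (f.injective.ne (by decide))
    simp only [f.map_adj_iff] at this
    revert this
    decide
end

section
/- Let W_k (k ≥ 4) denote the graph on vertices {u_1,…,u_k, v_1,…,v_k} where {u_1,…,u_k} is an independent set, {v_1,…,v_k} is a clique, and u_i is adjacent to v_j iff i = j or i ≤ j − 2; color u_1 and v_k white and all other vertices black. Then for 4 ≤ k < ℓ, the colored graph W_k does not embed into W_ℓ as a colored induced subgraph, so {W_k : k ≥ 4} is an infinite antichain of labelled graphs. -/
/-- The graph `W_k` on vertices `u_0, …, u_{k-1}` (the left summands) and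
`v_0, …, v_{k-1}` (the right summands): the `u`'s form an independent set, the
`v`'s form a clique, and `u_i` is adjacent to `v_j` iff `i = j` or `i + 2 ≤ j`. -/
def W (k : ℕ) : SimpleGraph (Fin k ⊕ Fin k) :=
  SimpleGraph.fromRel (fun a b =>
    (∃ i j : Fin k, a = Sum.inr i ∧ b = Sum.inr j ∧ i ≠ j) ∨
    (∃ i j : Fin k, a = Sum.inl i ∧ b = Sum.inr j ∧ ((i : ℕ) = (j : ℕ) ∨ (i : ℕ) + 2 ≤ (j : ℕ))))

/-- The colouring of `W_k`: `u_0` (first vertex `u_1` of the spiral) and the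
last clique vertex `v_{k-1}` are white; all other vertices are black. -/
def wColor (k : ℕ) (a : Fin k ⊕ Fin k) : Bool :=
  match a with
  | Sum.inl i => decide ((i : ℕ) = 0)
  | Sum.inr j => decide ((j : ℕ) = k - 1)

/-!
The two white vertices of `W_k` must go to the two white vertices of `W_ℓ`, and not crosswise:
`u_1` is adjacent to `v_{k-1}` (as `k ≥ 4`) but not to `u_0`. Then `v_0` goes to the clique, every
`u_i` with `i ≠ 0` (a non-neighbour of `v_0`) to the independent set, and every `v_j` (a
neighbour of `u_j`) to the clique. So the embedding induces index maps `g, h : Fin k → Fin ℓ`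
on the two sides with `g 0 = 0` and `h (k-1) = ℓ-1`. Since `u_n ≁ v_{n+1} ∼ u_{n+1}`, we get
`g (n+1) ≤ h (n+1) ≤ g n + 1`, so `g n ≤ n`. But `u_{k-2} ≁ v_{k-1}` forces
`g (k-2) ≥ ℓ-2 > k-2`.
-/

namespace W

variable {k l : ℕ}

theorem not_adj_inl_inl (i j : Fin k) : ¬ (W k).Adj (.inl i) (.inl j) := by
  simp [W, SimpleGraph.fromRel_adj]

theorem adj_inl_inr_iff (i j : Fin k) :
    (W k).Adj (.inl i) (.inr j) ↔ ((i : ℕ) = j ∨ (i : ℕ) + 2 ≤ j) := by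
  simp [W, SimpleGraph.fromRel_adj]

theorem adj_inr_inr_iff (i j : Fin k) : (W k).Adj (.inr i) (.inr j) ↔ i ≠ j := by
  simp [W, SimpleGraph.fromRel_adj]
  tauto

theorem isRight_of_adj {x y : Fin k ⊕ Fin k} (h : (W k).Adj x y) (hx : x.isLeft) :
    y.isRight := by
  obtain ⟨i, rfl⟩ := Sum.isLeft_iff.1 hx
  cases y with
  | inl j => exact absurd h (not_adj_inl_inl i j)
  | inr j => rfl

theorem isLeft_of_not_adj {x y : Fin k ⊕ Fin k} (hne : x ≠ y) (h : ¬ (W k).Adj x y)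
    (hy : y.isRight) : x.isLeft := by
  obtain ⟨j, rfl⟩ := Sum.isRight_iff.1 hy
  cases x with
  | inl i => rfl
  | inr i => exact absurd ((adj_inr_inr_iff i j).2 fun hij => hne (hij ▸ rfl)) h

theorem wColor_eq_true_iff (hl : 0 < l) (x : Fin l ⊕ Fin l) :
    wColor l x = true ↔ x = .inl ⟨0, hl⟩ ∨ x = .inr ⟨l - 1, by omega⟩ := by
  cases x with
  | inl i => simp [wColor, Fin.ext_iff]
  | inr j => simp [wColor, Fin.ext_iff]

theorem index_le_of_adj_iff (g h : Fin k → Fin l)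
    (hadj : ∀ i j, (W k).Adj (.inl i) (.inr j) ↔ (W l).Adj (.inl (g i)) (.inr (h j)))
    (hk : 0 < k) (hg₀ : (g ⟨0, hk⟩ : ℕ) = 0) (n : ℕ) (hn : n < k) :
    (g ⟨n, hn⟩ : ℕ) ≤ n := by
  induction n with
  | zero => exact hg₀.le
  | succ n ih =>
    have hnot := (hadj ⟨n, by omega⟩ ⟨n + 1, hn⟩).not.1 (by rw [adj_inl_inr_iff]; simp)
    have hdiag := (hadj ⟨n + 1, hn⟩ ⟨n + 1, hn⟩).1 (by rw [adj_inl_inr_iff]; simp)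
    rw [adj_inl_inr_iff] at hnot hdiag
    have := ih (by omega)
    omega

variable (f : W k ↪g W l)

theorem map_white_vertices (hk : 4 ≤ k) (hl : 0 < l)
    (hf : ∀ a, wColor l (f a) = wColor k a) :
    f (.inl ⟨0, by omega⟩) = .inl ⟨0, hl⟩ ∧
      f (.inr ⟨k - 1, by omega⟩) = .inr ⟨l - 1, by omega⟩ := by
  set u₀ : Fin k ⊕ Fin k := .inl ⟨0, by omega⟩
  set u₁ : Fin k ⊕ Fin k := .inl ⟨1, by omega⟩
  set v : Fin k ⊕ Fin k := .inr ⟨k - 1, by omega⟩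
  have white (x : Fin k ⊕ Fin k) (hx : wColor k x = true) :=
    (wColor_eq_true_iff hl (f x)).1 ((hf x).trans hx)
  have hne : f u₀ ≠ f v := f.injective.ne (by simp [u₀, v])
  rcases white u₀ rfl with h₀ | h₀ <;> rcases white v (by simp [v, wColor]) with h₁ | h₁
  · exact absurd (h₀.trans h₁.symm) hne
  · exact ⟨h₀, h₁⟩
  · exfalso
    have hu₁v : (W k).Adj u₁ v := (adj_inl_inr_iff _ _).2 (.inr (by simp; omega))
    have hu₁ : (f u₁).isRight := isRight_of_adj (f.map_adj_iff.2 hu₁v).symm (by simp [h₁])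
    have hu₀ : (f u₀).isLeft := isLeft_of_not_adj (f.injective.ne (by simp [u₀]))
      (f.map_adj_iff.not.2 (not_adj_inl_inl _ _)) hu₁
    simp [h₀] at hu₀
  · exact absurd (h₀.trans h₁.symm) hne

theorem exists_index_maps (hk : 0 < k) (h₀ : (f (.inl ⟨0, hk⟩)).isLeft) :
    ∃ g h : Fin k → Fin l,
      (∀ i, f (.inl i) = .inl (g i)) ∧ ∀ j, f (.inr j) = .inr (h j) := by
  have hv₀ : (f (.inr ⟨0, hk⟩)).isRight :=
    isRight_of_adj (f.map_adj_iff.2 ((adj_inl_inr_iff _ _).2 (.inl rfl))) h₀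
  have hu (i : Fin k) : (f (.inl i)).isLeft := by
    by_cases hi : (i : ℕ) = 0
    · rwa [show i = ⟨0, hk⟩ from Fin.ext hi]
    · refine isLeft_of_not_adj (f.injective.ne Sum.inl_ne_inr) ?_ hv₀
      rw [f.map_adj_iff, adj_inl_inr_iff]
      simp [hi]
  have hv (j : Fin k) : (f (.inr j)).isRight :=
    isRight_of_adj (f.map_adj_iff.2 ((adj_inl_inr_iff _ _).2 (.inl rfl))) (hu j)
  choose g hg using fun i => Sum.isLeft_iff.1 (hu i)
  choose h hh using fun j => Sum.isRight_iff.1 (hv j)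
  exact ⟨g, h, hg, hh⟩

end W

/-- For `4 ≤ k < ℓ`, the coloured graph `W_k` does not embed into `W_ℓ` as a
coloured induced subgraph; hence `{W_k : k ≥ 4}` is an infinite antichain of
labelled graphs (the colours form a two-element antichain, so an embedding must
preserve them exactly). -/
theorem W_labelled_antichain (k l : ℕ) (hk : 4 ≤ k) (hkl : k < l) :
    ¬ ∃ f : W k ↪g W l, ∀ a : Fin k ⊕ Fin k, wColor l (f a) = wColor k a := by
  rintro ⟨f, hf⟩
  obtain ⟨hu₀, hv⟩ := W.map_white_vertices f hk (by omega) hf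
  obtain ⟨g, h, hg, hh⟩ := W.exists_index_maps f (by omega) (by simp [hu₀])
  have hadj (i j : Fin k) :
      (W k).Adj (.inl i) (.inr j) ↔ (W l).Adj (.inl (g i)) (.inr (h j)) := by
    rw [← hg, ← hh, f.map_adj_iff]
  have hg₀ : (g ⟨0, by omega⟩ : ℕ) = 0 := by simpa [hg, Fin.ext_iff] using hu₀
  have hh₁ : (h ⟨k - 1, by omega⟩ : ℕ) = l - 1 := by simpa [hh, Fin.ext_iff] using hv
  have hle := W.index_le_of_adj_iff g h hadj (by omega) hg₀ (k - 2) (by omega)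
  have hnot := (hadj ⟨k - 2, by omega⟩ ⟨k - 1, by omega⟩).not.1
    (by rw [W.adj_inl_inr_iff]; dsimp only; omega)
  rw [W.adj_inl_inr_iff, hh₁] at hnot
  omega
end
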